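/- arXiv:0903.2408 — 5 statements merged into one kernel-verified Lean document; each statement's English description precedes it below -/
import Mathlib

section
/- For all real numbers y > 0 and v > 0, sup over λ with 0 < λ < 1/v of ( λ·y − λ²·v²/(1 − λ·v) ) is greater than or equal to y²/(2·v·y + 4·v²). -/
open Set

/-- The Chernoff exponent produced by Bernstein-type moment bounds, as a function of `λ = l`. -/
noncomputable def bernsteinExponent (y v l : ℝ) : ℝ := l * y - l ^ 2 * v ^ 2 / (1 - l * v)

lemma bernsteinExponent_le_div {y v l : ℝ} (hy : 0 ≤ y) (hv : 0 < v) (hl : l ∈ Ioo 0 (1 / v)) :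
    bernsteinExponent y v l ≤ y / v := by
  have hlv : l * v < 1 := (lt_div_iff₀ hv).mp hl.2
  have hpen : 0 ≤ l ^ 2 * v ^ 2 / (1 - l * v) := div_nonneg (by positivity) (by linarith)
  have hly : l * y ≤ y / v := by
    rw [le_div_iff₀ hv]
    nlinarith
  unfold bernsteinExponent
  linarith

lemma bddAbove_bernsteinExponent_image {y v : ℝ} (hy : 0 ≤ y) (hv : 0 < v) :
    BddAbove (bernsteinExponent y v '' Ioo 0 (1 / v)) := by
  refine ⟨y / v, ?_⟩
  rintro _ ⟨l, hl, rfl⟩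
  exact bernsteinExponent_le_div hy hv hl

lemma div_mul_add_mem_Ioo {y v : ℝ} (hy : 0 < y) (hv : 0 < v) :
    y / (v * (y + 2 * v)) ∈ Ioo 0 (1 / v) := by
  refine ⟨by positivity, ?_⟩
  rw [div_lt_div_iff₀ (by positivity) hv]
  nlinarith

/-- At this `λ`, `1 − λ v = 2 v / (y + 2 v)`, so the penalty term is exactly half of `λ y`. -/
lemma bernsteinExponent_div_mul_add {y v : ℝ} (hv : v ≠ 0) (hyv : y + 2 * v ≠ 0) :
    bernsteinExponent y v (y / (v * (y + 2 * v))) = y ^ 2 / (2 * v * y + 4 * v ^ 2) := by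
  have hgap : 1 - y / (v * (y + 2 * v)) * v = 2 * v / (y + 2 * v) := by
    rw [mul_comm v, ← div_div, div_mul_cancel₀ _ hv, eq_div_iff hyv, sub_mul,
      div_mul_cancel₀ _ hyv]
    ring
  unfold bernsteinExponent
  rw [hgap, show 2 * v * y + 4 * v ^ 2 = 2 * v * (y + 2 * v) by ring]
  field_simp
  ring

/-- Birgé–Massart type inequality:
`sup_{0 < λ < 1/v} (λ y − λ² v² / (1 − λ v)) ≥ y² / (2 v y + 4 v²)`. -/
theorem stmt_3 (y v : ℝ) (hy : 0 < y) (hv : 0 < v) :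
    y ^ 2 / (2 * v * y + 4 * v ^ 2) ≤
      sSup ((fun l : ℝ => l * y - l ^ 2 * v ^ 2 / (1 - l * v)) '' Set.Ioo 0 (1 / v)) := by
  rw [← bernsteinExponent_div_mul_add hv.ne' (by positivity)]
  exact le_csSup (bddAbove_bernsteinExponent_image hy.le hv)
    (mem_image_of_mem _ (div_mul_add_mem_Ioo hy hv))
end

section
/- Let N be a nonnegative random variable on a probability space (Ω, 𝓐, P) and let v > 0 be a constant such that E[N^p] ≤ p!·v^p for every integer p ≥ 1. Then for every δ ≥ 0 and every x > 0, P( N > v^{1+δ}·max(x, 1) ) ≤ 2 · exp( −(1/2)·v^δ·max(x, 1) ). -/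
/-!
Expanding `exp (t N)` in its power series and integrating term by term, the moment bounds
`E[N^p] ≤ p! v^p` give `E[exp (t N)] ≤ ∑ (t v)^p = (1 - t v)⁻¹` for `0 ≤ t v < 1`.
With `t = 1 / (2 v)` this is `E[exp (N / (2 v))] ≤ 2`, and Markov's inequality for
`exp (N / (2 v))` at level `v^{1+δ} max(x, 1)` gives the tail bound.
-/

open MeasureTheory Real

lemma ENNReal.ofReal_exp_mul_eq_tsum {t y : ℝ} (ht : 0 ≤ t) (hy : 0 ≤ y) :
    ENNReal.ofReal (exp (t * y)) =
      ∑' p : ℕ, ENNReal.ofReal (y ^ p) * ENNReal.ofReal (t ^ p / p.factorial) := by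
  rw [exp_eq_exp_ℝ, NormedSpace.exp_eq_tsum_div,
    ENNReal.ofReal_tsum_of_nonneg (fun p => by positivity) (summable_pow_div_factorial _)]
  congr 1 with p
  rw [← ENNReal.ofReal_mul (by positivity), mul_pow, mul_comm (t ^ p), mul_div_assoc]

section

variable {Ω : Type*} [MeasurableSpace Ω] {μ : Measure Ω} {N : Ω → ℝ}

lemma lintegral_ofReal_exp_mul_eq_tsum (hN : AEMeasurable N μ) (hN0 : ∀ ω, 0 ≤ N ω)
    {t : ℝ} (ht : 0 ≤ t) :
    ∫⁻ ω, ENNReal.ofReal (exp (t * N ω)) ∂μ =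
      ∑' p : ℕ,
        (∫⁻ ω, ENNReal.ofReal (N ω ^ p) ∂μ) * ENNReal.ofReal (t ^ p / p.factorial) := by
  have hpow (p : ℕ) : AEMeasurable (fun ω => ENNReal.ofReal (N ω ^ p)) μ :=
    (hN.pow_const p).ennreal_ofReal
  simp_rw [ENNReal.ofReal_exp_mul_eq_tsum ht (hN0 _)]
  rw [lintegral_tsum fun p => (hpow p).mul_const _]
  congr 1 with p
  exact lintegral_mul_const'' _ (hpow p)

lemma lintegral_ofReal_exp_mul_le_of_moment_le [IsProbabilityMeasure μ]
    (hN : AEMeasurable N μ) (hN0 : ∀ ω, 0 ≤ N ω) {v t : ℝ}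
    (hmom : ∀ p : ℕ, 1 ≤ p →
      ∫⁻ ω, ENNReal.ofReal (N ω ^ p) ∂μ ≤ ENNReal.ofReal ((p.factorial : ℝ) * v ^ p))
    (ht : 0 ≤ t) (hv : 0 ≤ v) (htv : t * v < 1) :
    ∫⁻ ω, ENNReal.ofReal (exp (t * N ω)) ∂μ ≤ ENNReal.ofReal (1 - t * v)⁻¹ := by
  have hterm (p : ℕ) : (∫⁻ ω, ENNReal.ofReal (N ω ^ p) ∂μ) *
      ENNReal.ofReal (t ^ p / p.factorial) ≤ ENNReal.ofReal ((t * v) ^ p) := by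
    rcases Nat.eq_zero_or_pos p with rfl | hp
    · simp
    calc (∫⁻ ω, ENNReal.ofReal (N ω ^ p) ∂μ) * ENNReal.ofReal (t ^ p / p.factorial)
        ≤ ENNReal.ofReal ((p.factorial : ℝ) * v ^ p) * ENNReal.ofReal (t ^ p / p.factorial) :=
          mul_le_mul_left (hmom p hp) _
      _ = ENNReal.ofReal ((t * v) ^ p) := by
          rw [← ENNReal.ofReal_mul (by positivity)]
          congr 1
          field_simp
          ring
  rw [lintegral_ofReal_exp_mul_eq_tsum hN hN0 ht, ← tsum_geometric_of_lt_one (by positivity) htv,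
    ENNReal.ofReal_tsum_of_nonneg (fun p => by positivity)
      (summable_geometric_of_lt_one (by positivity) htv)]
  exact ENNReal.tsum_le_tsum hterm

lemma measure_lt_le_ofReal_exp_mul_lintegral (hN : AEMeasurable N μ) {t : ℝ} (ht : 0 ≤ t)
    (a : ℝ) :
    μ {ω | a < N ω} ≤
      ENNReal.ofReal (exp (-(t * a))) * ∫⁻ ω, ENNReal.ofReal (exp (t * N ω)) ∂μ := by
  have hexp_ne_zero : ENNReal.ofReal (exp (t * a)) ≠ 0 := ENNReal.ofReal_ne_zero_iff.2 (exp_pos _)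
  have hmarkov : ENNReal.ofReal (exp (t * a)) * μ {ω | a < N ω} ≤
      ∫⁻ ω, ENNReal.ofReal (exp (t * N ω)) ∂μ := by
    refine le_trans (mul_le_mul_right (measure_mono fun ω hω => ?_) _)
      (mul_meas_ge_le_lintegral₀ (hN.const_mul t).exp.ennreal_ofReal _)
    exact ENNReal.ofReal_le_ofReal (exp_le_exp.2 (mul_le_mul_of_nonneg_left (le_of_lt hω) ht))
  rw [exp_neg, ENNReal.ofReal_inv_of_pos (exp_pos _), ← ENNReal.div_eq_inv_mul,
    ENNReal.le_div_iff_mul_le (Or.inl hexp_ne_zero) (Or.inl ENNReal.ofReal_ne_top), mul_comm]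
  exact hmarkov

end

/-- If a nonnegative random variable `N` satisfies `E[N^p] ≤ p! v^p` for all integers
`p ≥ 1`, then `P(N > v^{1+δ} max(x,1)) ≤ 2 exp(−(1/2) v^δ max(x,1))`. -/
theorem stmt_6 {Ω : Type*} [MeasurableSpace Ω] (P : Measure Ω) [IsProbabilityMeasure P]
    (N : Ω → ℝ) (hN : Measurable N) (hN0 : ∀ ω, 0 ≤ N ω) (v : ℝ) (hv : 0 < v)
    (hmom : ∀ p : ℕ, 1 ≤ p →
      ∫⁻ ω, ENNReal.ofReal (N ω ^ p) ∂P ≤ ENNReal.ofReal ((Nat.factorial p : ℝ) * v ^ p)) :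
    ∀ δ : ℝ, 0 ≤ δ → ∀ x : ℝ, 0 < x →
      P {ω | v ^ (1 + δ) * max x 1 < N ω} ≤
        ENNReal.ofReal (2 * Real.exp (-(1 / 2) * v ^ δ * max x 1)) := by
  intro δ _ x _
  set t := 1 / (2 * v) with ht
  have htv : t * v = 1 / 2 := by
    rw [ht]
    field_simp
  have hmgf : ∫⁻ ω, ENNReal.ofReal (exp (t * N ω)) ∂P ≤ ENNReal.ofReal 2 := by
    convert lintegral_ofReal_exp_mul_le_of_moment_le (t := t) hN.aemeasurable hN0 hmom
      (by positivity) hv.le (by rw [htv]; norm_num) using 2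
    rw [htv]; norm_num
  have hexponent : t * (v ^ (1 + δ) * max x 1) = 1 / 2 * v ^ δ * max x 1 := by
    rw [rpow_add hv, rpow_one]
    linear_combination (v ^ δ * max x 1) * htv
  calc P {ω | v ^ (1 + δ) * max x 1 < N ω}
      ≤ ENNReal.ofReal (exp (-(t * (v ^ (1 + δ) * max x 1)))) * ENNReal.ofReal 2 :=
        (measure_lt_le_ofReal_exp_mul_lintegral hN.aemeasurable (by positivity) _).trans
          (mul_le_mul_right hmgf _)
    _ = ENNReal.ofReal (2 * exp (-(1 / 2) * v ^ δ * max x 1)) := by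
        rw [← ENNReal.ofReal_mul (exp_pos _).le, hexponent, mul_comm, neg_mul, neg_mul]
end

section
/- Let k ≥ 2 be an integer and let X₂, X₃, …, X_k be nonnegative, identically distributed random variables on a probability space (Ω, 𝓐, P), such that the subfamily of the X_n with odd index n is mutually independent and the subfamily of the X_n with even index n is mutually independent. Let F̂(λ) := E[e^{−λX₂}] for λ > 0. Then for every λ > 0 and every t ≥ 0, P( X₂ + X₃ + ⋯ + X_k ≤ t ) ≤ 2 · F̂(λ)^{(k−2)/2} · e^{λt/2}. -/
open MeasureTheory Real ProbabilityTheory Finset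

/-!
Split the sum into its odd- and even-indexed parts: if the whole sum is at most `t`, one of the
two parts is at most `t / 2`. Each part is a sum of at least `(k - 2) / 2` i.i.d. nonnegative
terms, so the exponential Chernoff bound `P(S ≤ ε) ≤ e^{λε} E[e^{-λS}]` together with
`E[e^{-λS}] = F̂(λ)^{#terms} ≤ F̂(λ)^{(k-2)/2}` (as `F̂(λ) ≤ 1`) bounds each of the two events.
-/

lemma card_Icc_mul_add_le_card_filter {k a r : ℕ} (p : ℕ → Prop) [DecidablePred p]
    (hmem : ∀ m ∈ Icc 1 a, 2 * m + r ∈ Icc 2 k ∧ p (2 * m + r)) :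
    a ≤ #{n ∈ Icc 2 k | p n} := by
  simpa using card_le_card_of_injOn (fun m => 2 * m + r) (fun m hm => mem_filter.2 (hmem m hm))
    (fun m _ m' _ h => by simp only at h; omega)

lemma sub_two_div_two_le_card_filter_odd (k : ℕ) :
    ((k : ℝ) - 2) / 2 ≤ #{n ∈ Icc 2 k | Odd n} := by
  have : (k - 1) / 2 ≤ #{n ∈ Icc 2 k | Odd n} :=
    card_Icc_mul_add_le_card_filter (r := 1) _ fun m hm => by
      simp only [mem_Icc] at hm ⊢
      exact ⟨by omega, odd_two_mul_add_one m⟩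
  have : (k : ℝ) ≤ 2 * #{n ∈ Icc 2 k | Odd n} + 2 := by exact_mod_cast (by omega)
  linarith

lemma sub_two_div_two_le_card_filter_even (k : ℕ) :
    ((k : ℝ) - 2) / 2 ≤ #{n ∈ Icc 2 k | Even n} := by
  have : k / 2 ≤ #{n ∈ Icc 2 k | Even n} :=
    card_Icc_mul_add_le_card_filter (r := 0) _ fun m hm => by
      simp only [mem_Icc] at hm ⊢
      exact ⟨by omega, even_two_mul m⟩
  have : (k : ℝ) ≤ 2 * #{n ∈ Icc 2 k | Even n} + 2 := by exact_mod_cast (by omega)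
  linarith

section Chernoff

variable {Ω : Type*} [MeasurableSpace Ω] {P : Measure Ω} {l : ℝ}

lemma exp_neg_mul_le_one {x : ℝ} (hl : 0 ≤ l) (hx : 0 ≤ x) : exp (-l * x) ≤ 1 :=
  exp_le_one_iff.2 (by nlinarith)

lemma integrable_exp_neg_mul_of_nonneg [IsFiniteMeasure P] {Y : Ω → ℝ} (hY : Measurable Y)
    (h_nonneg : ∀ ω, 0 ≤ Y ω) (hl : 0 ≤ l) : Integrable (fun ω => exp (-l * Y ω)) P :=
  Integrable.of_bound ((hY.const_mul (-l)).exp.aestronglyMeasurable) 1 <| ae_of_all _ fun ω => by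
    rw [norm_of_nonneg (exp_pos _).le]
    exact exp_neg_mul_le_one hl (h_nonneg ω)

lemma mgf_neg_le_one_of_nonneg [IsProbabilityMeasure P] {Y : Ω → ℝ} (hY : Measurable Y)
    (h_nonneg : ∀ ω, 0 ≤ Y ω) (hl : 0 ≤ l) : mgf Y P (-l) ≤ 1 := by
  calc mgf Y P (-l) ≤ ∫ _, (1 : ℝ) ∂P :=
        integral_mono (integrable_exp_neg_mul_of_nonneg hY h_nonneg hl) (integrable_const 1)
          fun ω => exp_neg_mul_le_one hl (h_nonneg ω)
    _ = 1 := by simp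

theorem measureReal_sum_le_le_exp_mul_mgf_pow [IsProbabilityMeasure P] {ι : Type*}
    {Y : ι → Ω → ℝ} {Z : Ω → ℝ} {s : Finset ι} (h_indep : iIndepFun Y P)
    (h_meas : ∀ i, Measurable (Y i)) (h_nonneg : ∀ i ∈ s, ∀ ω, 0 ≤ Y i ω)
    (h_ident : ∀ i ∈ s, IdentDistrib (Y i) Z P P) (hl : 0 ≤ l) (ε : ℝ) :
    P.real {ω | ∑ i ∈ s, Y i ω ≤ ε} ≤ exp (l * ε) * mgf Z P (-l) ^ #s := by
  have h_int : Integrable (fun ω => exp (-l * (∑ i ∈ s, Y i) ω)) P :=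
    integrable_exp_neg_mul_of_nonneg (by fun_prop)
      (fun ω => by simpa using sum_nonneg fun i hi => h_nonneg i hi ω) hl
  calc P.real {ω | ∑ i ∈ s, Y i ω ≤ ε} = P.real {ω | (∑ i ∈ s, Y i) ω ≤ ε} := by
        simp only [Finset.sum_apply]
    _ ≤ exp (- -l * ε) * mgf (∑ i ∈ s, Y i) P (-l) :=
        measure_le_le_exp_mul_mgf ε (by linarith) h_int
    _ = exp (l * ε) * mgf Z P (-l) ^ #s := by
        rw [neg_neg, h_indep.mgf_sum h_meas, prod_eq_pow_card fun i hi =>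
          mgf_congr_of_identDistrib (Y i) Z (h_ident i hi) (-l)]

theorem measureReal_sum_filter_le_le_exp_mul_mgf_pow [IsProbabilityMeasure P] {ι : Type*}
    {Y : ι → Ω → ℝ} {Z : Ω → ℝ} {s : Finset ι} {p : ι → Prop} [DecidablePred p]
    (h_indep : iIndepFun (fun i : {i // i ∈ s ∧ p i} => Y i) P)
    (h_meas : ∀ i, Measurable (Y i)) (h_nonneg : ∀ i ∈ s, ∀ ω, 0 ≤ Y i ω)
    (h_ident : ∀ i ∈ s, IdentDistrib (Y i) Z P P) (hl : 0 ≤ l) (ε : ℝ) :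
    P.real {ω | ∑ i ∈ s with p i, Y i ω ≤ ε} ≤ exp (l * ε) * mgf Z P (-l) ^ #{i ∈ s | p i} := by
  classical
  have h_filter : {i ∈ s | i ∈ s ∧ p i} = {i ∈ s | p i} :=
    filter_congr fun i hi => by simp [hi]
  have h := measureReal_sum_le_le_exp_mul_mgf_pow (s := s.subtype _) h_indep
    (fun i => h_meas i) (fun i _ => h_nonneg i i.2.1) (fun i _ => h_ident i i.2.1) hl ε
  have h_sum : ∀ ω, ∑ i ∈ s.subtype (fun i => i ∈ s ∧ p i), Y i ω = ∑ i ∈ s with p i, Y i ω :=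
    fun ω => by rw [sum_subtype_eq_sum_filter (fun i => Y i ω), h_filter]
  simpa only [h_sum, card_subtype, h_filter] using h

theorem measure_sum_filter_le_le_ofReal_mgf_rpow [IsProbabilityMeasure P] {ι : Type*}
    {Y : ι → Ω → ℝ} {Z : Ω → ℝ} {s : Finset ι} {p : ι → Prop} [DecidablePred p]
    (h_indep : iIndepFun (fun i : {i // i ∈ s ∧ p i} => Y i) P)
    (h_meas : ∀ i, Measurable (Y i)) (hZ : Measurable Z) (h_nonneg : ∀ i ∈ s, ∀ ω, 0 ≤ Y i ω)
    (hZ_nonneg : ∀ ω, 0 ≤ Z ω) (h_ident : ∀ i ∈ s, IdentDistrib (Y i) Z P P) (hl : 0 ≤ l)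
    {r : ℝ} (hr : r ≤ #{i ∈ s | p i}) (ε : ℝ) :
    P {ω | ∑ i ∈ s with p i, Y i ω ≤ ε} ≤ ENNReal.ofReal (mgf Z P (-l) ^ r * exp (l * ε)) := by
  have hF0 : 0 < mgf Z P (-l) := mgf_pos (integrable_exp_neg_mul_of_nonneg hZ hZ_nonneg hl)
  have hF1 : mgf Z P (-l) ≤ 1 := mgf_neg_le_one_of_nonneg hZ hZ_nonneg hl
  rw [← ofReal_measureReal]
  refine ENNReal.ofReal_le_ofReal <|
    (measureReal_sum_filter_le_le_exp_mul_mgf_pow h_indep h_meas h_nonneg h_ident hl ε).trans ?_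
  rw [mul_comm, ← rpow_natCast]
  exact mul_le_mul_of_nonneg_right (rpow_le_rpow_of_exponent_ge hF0 hF1 hr) (exp_pos _).le

end Chernoff

lemma setOf_sum_le_subset_union {ι α : Type*} (s : Finset ι) (p : ι → Prop) [DecidablePred p]
    (f : ι → α → ℝ) (t : ℝ) :
    {x | ∑ i ∈ s, f i x ≤ t} ⊆
      {x | ∑ i ∈ s with p i, f i x ≤ t / 2} ∪ {x | ∑ i ∈ s with ¬p i, f i x ≤ t / 2} := by
  intro x hx
  rw [Set.mem_ofPred_eq, ← sum_filter_add_sum_filter_not s p] at hx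
  by_contra h
  simp only [Set.mem_union, Set.mem_ofPred_eq, not_or, not_le] at h
  linarith

/-- Lower-tail Chernoff bound for a 2-dependent family: if `X₂, …, X_k` are nonnegative,
identically distributed, the odd-indexed variables are mutually independent and the
even-indexed variables are mutually independent, then with `F̂(λ) = E[e^{−λX₂}]`,
`P(X₂ + ⋯ + X_k ≤ t) ≤ 2 F̂(λ)^{(k−2)/2} e^{λt/2}`. -/
theorem stmt_9 {Ω : Type*} [MeasurableSpace Ω] (P : Measure Ω) [IsProbabilityMeasure P]
    (k : ℕ) (hk : 2 ≤ k) (X : ℕ → Ω → ℝ) (hmeas : ∀ n, Measurable (X n))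
    (hpos : ∀ n ∈ Finset.Icc 2 k, ∀ ω, 0 ≤ X n ω)
    (hid : ∀ n ∈ Finset.Icc 2 k, IdentDistrib (X n) (X 2) P P)
    (hindep_odd :
      iIndepFun
        (fun n : {n : ℕ // n ∈ Finset.Icc 2 k ∧ Odd n} => X n) P)
    (hindep_even :
      iIndepFun
        (fun n : {n : ℕ // n ∈ Finset.Icc 2 k ∧ Even n} => X n) P) :
    ∀ l : ℝ, 0 < l → ∀ t : ℝ, 0 ≤ t →
      P {ω | ∑ n ∈ Finset.Icc 2 k, X n ω ≤ t} ≤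
        ENNReal.ofReal
          (2 * (∫ ω, Real.exp (-l * X 2 ω) ∂P) ^ (((k : ℝ) - 2) / 2) *
            Real.exp (l * t / 2)) := by
  intro l hl t _
  change P _ ≤ ENNReal.ofReal (2 * mgf (X 2) P (-l) ^ _ * _)
  have h2 : 2 ∈ Icc 2 k := mem_Icc.2 ⟨le_rfl, hk⟩
  have h_half {p : ℕ → Prop} [DecidablePred p]
      (h_indep : iIndepFun (fun n : {n // n ∈ Icc 2 k ∧ p n} => X n) P)
      (h_card : ((k : ℝ) - 2) / 2 ≤ #{n ∈ Icc 2 k | p n}) :=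
    measure_sum_filter_le_le_ofReal_mgf_rpow h_indep hmeas (hmeas 2) hpos (hpos 2 h2) hid hl.le
      h_card (t / 2)
  have h_split := setOf_sum_le_subset_union (Icc 2 k) (fun n => Odd n) X t
  simp only [Nat.not_odd_iff_even] at h_split
  calc P {ω | ∑ n ∈ Icc 2 k, X n ω ≤ t}
      ≤ P {ω | ∑ n ∈ Icc 2 k with Odd n, X n ω ≤ t / 2} +
          P {ω | ∑ n ∈ Icc 2 k with Even n, X n ω ≤ t / 2} :=
        (measure_mono h_split).trans (measure_union_le _ _)
    _ ≤ 2 * ENNReal.ofReal (mgf (X 2) P (-l) ^ (((k : ℝ) - 2) / 2) * exp (l * (t / 2))) := by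
        rw [two_mul]
        exact add_le_add (h_half hindep_odd (sub_two_div_two_le_card_filter_odd k))
          (h_half hindep_even (sub_two_div_two_le_card_filter_even k))
    _ = ENNReal.ofReal (2 * mgf (X 2) P (-l) ^ (((k : ℝ) - 2) / 2) * exp (l * t / 2)) := by
        rw [mul_assoc, mul_div_assoc, ENNReal.ofReal_mul zero_le_two, ENNReal.ofReal_ofNat]
end

section
/- For all real numbers K > 0, w ≥ 1 and x > 0, max(x, 1) · sup over λ with 0 < λ < 1/K of ( λ·min(x, 1)/(3w) − λ²·K²/(1 − λ·K) ) ≥ ( min(x², x) ) / ( 42 · max(K², K) · w² ). -/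
/-!
With `y = min(x,1)/(3w) ≤ 1/3`, one explicit `λ` shows the supremum is at least
`y²/(2Ky + 4K²)`; since `2Ky + 4K² ≤ (14/3) max(K²,K)` and `max(x,1) · min(x,1)² = min(x²,x)`,
this is the bound, `9 · 14/3 = 42`.
-/

open Set

section LegendreBound

variable {v y : ℝ}

lemma bddAbove_image_Ioo_mul_sub_sq_div (hv : 0 < v) (hy : 0 ≤ y) :
    BddAbove ((fun l : ℝ => l * y - l ^ 2 * v ^ 2 / (1 - l * v)) '' Ioo 0 (1 / v)) := by
  refine ⟨1 / v * y, ?_⟩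
  rintro _ ⟨l, ⟨-, hl⟩, rfl⟩
  have hlv : l * v < 1 := (lt_div_iff₀ hv).mp hl
  have hpen : 0 ≤ l ^ 2 * v ^ 2 / (1 - l * v) := div_nonneg (by positivity) (by linarith)
  have hlin : l * y ≤ 1 / v * y := mul_le_mul_of_nonneg_right hl.le hy
  linarith

/-- The choice `λ = y / (v (y + 2v))`, for which `1 - λ v = 2v / (y + 2v)`, attains the bound. -/
lemma sq_div_le_sSup_image_Ioo (hv : 0 < v) (hy : 0 < y) :
    y ^ 2 / (2 * v * y + 4 * v ^ 2) ≤
      sSup ((fun l : ℝ => l * y - l ^ 2 * v ^ 2 / (1 - l * v)) '' Ioo 0 (1 / v)) := by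
  set l := y / (v * (y + 2 * v))
  have hlv : l * v = y / (y + 2 * v) := by
    simp only [l]
    field_simp
  have hgap : 1 - l * v = 2 * v / (y + 2 * v) := by rw [hlv]; field_simp; ring
  have hmem : l ∈ Ioo 0 (1 / v) := by
    refine ⟨by positivity, (lt_div_iff₀ hv).mpr ?_⟩
    rw [hlv, div_lt_one (by positivity)]
    linarith
  have hval : l * y - l ^ 2 * v ^ 2 / (1 - l * v) = y ^ 2 / (2 * v * y + 4 * v ^ 2) := by
    rw [hgap]
    simp only [l]
    field_simp
    ring
  rw [← hval]
  exact le_csSup (bddAbove_image_Ioo_mul_sub_sq_div hv hy.le) ⟨l, hmem, rfl⟩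

end LegendreBound

lemma min_sq_self_eq_max_one_mul_min_one_sq {x : ℝ} (hx : 0 ≤ x) :
    min (x ^ 2) x = max x 1 * min x 1 ^ 2 := by
  rcases le_total x 1 with h | h
  · rw [min_eq_left h, max_eq_right h, min_eq_left (by nlinarith)]
    ring
  · rw [min_eq_right h, max_eq_left h, min_eq_right (by nlinarith)]
    ring

lemma div_max_sq_le_sq_div {K y : ℝ} (hK : 0 < K) (hy0 : 0 < y) (hy : y ≤ 1 / 3) :
    3 * y ^ 2 / (14 * max (K ^ 2) K) ≤ y ^ 2 / (2 * K * y + 4 * K ^ 2) := by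
  have hden : 2 * K * y + 4 * K ^ 2 ≤ 14 / 3 * max (K ^ 2) K := by
    have := le_max_left (K ^ 2) K
    have := le_max_right (K ^ 2) K
    nlinarith
  calc 3 * y ^ 2 / (14 * max (K ^ 2) K) = y ^ 2 / (14 / 3 * max (K ^ 2) K) := by
        field_simp
    _ ≤ y ^ 2 / (2 * K * y + 4 * K ^ 2) :=
        div_le_div_of_nonneg_left (sq_nonneg y) (by positivity) hden

/-- Explicit lower bound (4.11): for `K > 0`, `w ≥ 1`, `x > 0`,
`max(x,1) · sup_{0<λ<1/K} (λ min(x,1)/(3w) − λ²K²/(1−λK)) ≥ min(x²,x)/(42 max(K²,K) w²)`. -/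
theorem stmt_10 (K w x : ℝ) (hK : 0 < K) (hw : 1 ≤ w) (hx : 0 < x) :
    min (x ^ 2) x / (42 * max (K ^ 2) K * w ^ 2) ≤
      max x 1 *
        sSup ((fun l : ℝ => l * min x 1 / (3 * w) - l ^ 2 * K ^ 2 / (1 - l * K)) ''
          Set.Ioo 0 (1 / K)) := by
  set y := min x 1 / (3 * w) with hy_def
  have hy0 : 0 < y := by positivity
  have hy : y ≤ 1 / 3 := by
    rw [div_le_div_iff₀ (by positivity) (by norm_num)]
    nlinarith [min_le_right x 1]
  have hfun : (fun l : ℝ => l * min x 1 / (3 * w) - l ^ 2 * K ^ 2 / (1 - l * K)) =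
      fun l => l * y - l ^ 2 * K ^ 2 / (1 - l * K) := by
    funext l
    rw [mul_div_assoc]
  have hmax : 0 ≤ max x 1 := le_max_of_le_right zero_le_one
  calc min (x ^ 2) x / (42 * max (K ^ 2) K * w ^ 2)
      = max x 1 * (3 * y ^ 2 / (14 * max (K ^ 2) K)) := by
        rw [min_sq_self_eq_max_one_mul_min_one_sq hx.le, hy_def]
        field_simp
        ring
    _ ≤ max x 1 * (y ^ 2 / (2 * K * y + 4 * K ^ 2)) :=
        mul_le_mul_of_nonneg_left (div_max_sq_le_sq_div hK hy0 hy) hmax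
    _ ≤ _ := by
        rw [hfun]
        exact mul_le_mul_of_nonneg_left (sq_div_le_sSup_image_Ioo hK hy0) hmax
end

section
/- Let n ≥ 2 be an integer and let ξ₂, ξ₃, …, ξ_n be identically distributed real-valued random variables on a probability space (Ω, 𝓐, P) with E[ξ₂] = 0 and E[|ξ₂|^p] ≤ p!·K^p for every integer p ≥ 1, where K > 0 is a constant. Assume that the subfamily of the ξ_k with odd index k is mutually independent and the subfamily of the ξ_k with even index k is mutually independent. Then for every a > 0 and every λ with 0 < λ < 1/K, P( ξ₂ + ξ₃ + ⋯ + ξ_n ≥ a ) ≤ 2 · exp( −λ·a/2 + (n/2)·λ²·K²/(1 − λ·K) ). -/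
/-!
Expanding the exponential,
`E[e^{λξ}] ≤ 1 + λ E[ξ] + Σ_{p ≥ 2} λ^p E|ξ|^p / p! ≤ 1 + Σ_{p ≥ 2} (λK)^p`,
so the centering and the moment bounds give `E[e^{λξ}] ≤ exp (λ²K²/(1 - λK))`. The odd-indexed and
the even-indexed parts of the sum are each sums of at most `n/2` independent copies of `ξ₂`, so the
Chernoff bound controls each of them exceeding `a/2`; and if the whole sum is at least `a`, one of
the two parts is at least `a/2`.
-/

open MeasureTheory Real ProbabilityTheory Finset
open scoped Nat

lemma Real.exp_le_one_add_add_exp_abs_sub_one_sub (x : ℝ) :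
    exp x ≤ 1 + x + (exp |x| - 1 - |x|) := by
  rcases le_or_gt 0 x with hx | hx
  · rw [abs_of_nonneg hx]
    linarith
  · have := Real.self_le_sinh_iff.mpr (neg_nonneg.mpr hx.le)
    rw [Real.sinh_eq, neg_neg] at this
    rw [abs_of_neg hx]
    linarith

lemma Real.hasSum_exp_sub_one_sub (x : ℝ) :
    HasSum (fun n : ℕ => x ^ (n + 2) / (n + 2)!) (exp x - 1 - x) := by
  have h := (hasSum_nat_add_iff' 2).mpr (Real.exp_eq_exp_ℝ ▸ NormedSpace.expSeries_div_hasSum_exp x)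
  simpa [Finset.sum_range_succ, sub_sub] using h

section MomentBound

variable {Ω : Type*} [MeasurableSpace Ω] {P : Measure Ω} {X : Ω → ℝ} {t K : ℝ}

lemma lintegral_exp_abs_sub_one_sub_le_of_moment_le (hX : Measurable X) (ht : 0 ≤ t)
    (hK : 0 ≤ K) (htK : t * K < 1)
    (hmom : ∀ p : ℕ, 2 ≤ p →
      ∫⁻ ω, ENNReal.ofReal (|X ω| ^ p) ∂P ≤ ENNReal.ofReal (p ! * K ^ p)) :
    ∫⁻ ω, ENNReal.ofReal (exp (t * |X ω|) - 1 - t * |X ω|) ∂P ≤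
      ENNReal.ofReal ((t * K) ^ 2 / (1 - t * K)) := by
  have htK0 : 0 ≤ t * K := mul_nonneg ht hK
  have hgeom : HasSum (fun p : ℕ => (t * K) ^ (p + 2)) ((t * K) ^ 2 / (1 - t * K)) := by
    simpa [pow_add, mul_comm, div_eq_mul_inv] using
      (hasSum_geometric_of_lt_one htK0 htK).mul_left ((t * K) ^ 2)
  have hmeas : ∀ p : ℕ, Measurable fun ω => ENNReal.ofReal (|X ω| ^ p) :=
    fun p => ENNReal.measurable_ofReal.comp (hX.abs.pow_const p)
  calc ∫⁻ ω, ENNReal.ofReal (exp (t * |X ω|) - 1 - t * |X ω|) ∂P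
      = ∫⁻ ω, ∑' p : ℕ, ENNReal.ofReal (t ^ (p + 2) / (p + 2)!) *
          ENNReal.ofReal (|X ω| ^ (p + 2)) ∂P := by
        refine lintegral_congr fun ω => ?_
        rw [(Real.hasSum_exp_sub_one_sub _).tsum_eq.symm,
          ENNReal.ofReal_tsum_of_nonneg (fun p => by positivity)
            (Real.hasSum_exp_sub_one_sub _).summable]
        refine tsum_congr fun p => ?_
        rw [← ENNReal.ofReal_mul (by positivity), mul_pow, mul_div_right_comm]
    _ = ∑' p : ℕ, ENNReal.ofReal (t ^ (p + 2) / (p + 2)!) *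
          ∫⁻ ω, ENNReal.ofReal (|X ω| ^ (p + 2)) ∂P := by
        rw [lintegral_tsum fun p => ((hmeas _).const_mul _).aemeasurable]
        exact tsum_congr fun p => lintegral_const_mul _ (hmeas _)
    _ ≤ ∑' p : ℕ, ENNReal.ofReal (t ^ (p + 2) / (p + 2)!) *
          ENNReal.ofReal ((p + 2)! * K ^ (p + 2)) := by
        gcongr with p
        exact_mod_cast hmom (p + 2) (by omega)
    _ = ENNReal.ofReal ((t * K) ^ 2 / (1 - t * K)) := by
        rw [← hgeom.tsum_eq, ENNReal.ofReal_tsum_of_nonneg (fun p => by positivity)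
          hgeom.summable]
        refine tsum_congr fun p => ?_
        rw [← ENNReal.ofReal_mul (by positivity)]
        congr 1
        field_simp
        ring

lemma integrable_exp_abs_sub_one_sub_of_moment_le (hX : Measurable X) (ht : 0 ≤ t)
    (hK : 0 ≤ K) (htK : t * K < 1)
    (hmom : ∀ p : ℕ, 2 ≤ p →
      ∫⁻ ω, ENNReal.ofReal (|X ω| ^ p) ∂P ≤ ENNReal.ofReal (p ! * K ^ p)) :
    Integrable (fun ω => exp (t * |X ω|) - 1 - t * |X ω|) P := by
  have hmeas : Measurable fun ω => t * |X ω| := hX.abs.const_mul t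
  refine ⟨((hmeas.exp.sub_const 1).sub hmeas).aestronglyMeasurable, ?_⟩
  rw [hasFiniteIntegral_iff_ofReal (ae_of_all _ fun ω => ?_)]
  · exact (lintegral_exp_abs_sub_one_sub_le_of_moment_le hX ht hK htK hmom).trans_lt
      ENNReal.ofReal_lt_top
  · exact sub_nonneg.mpr (by linarith [add_one_le_exp (t * |X ω|)])

lemma integrable_exp_mul_of_moment_le [IsFiniteMeasure P] (hX : Measurable X)
    (hint : Integrable X P) (ht : 0 ≤ t) (hK : 0 ≤ K) (htK : t * K < 1)
    (hmom : ∀ p : ℕ, 2 ≤ p →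
      ∫⁻ ω, ENNReal.ofReal (|X ω| ^ p) ∂P ≤ ENNReal.ofReal (p ! * K ^ p)) :
    Integrable (fun ω => exp (t * X ω)) P := by
  have hbound : Integrable (fun ω => 1 + t * X ω + (exp (t * |X ω|) - 1 - t * |X ω|)) P :=
    ((integrable_const 1).add (hint.const_mul t)).add
      (integrable_exp_abs_sub_one_sub_of_moment_le hX ht hK htK hmom)
  refine hbound.mono' (hX.const_mul t).exp.aestronglyMeasurable (ae_of_all _ fun ω => ?_)
  have h := Real.exp_le_one_add_add_exp_abs_sub_one_sub (t * X ω)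
  rwa [abs_mul, abs_of_nonneg ht, ← abs_of_pos (exp_pos (t * X ω))] at h

lemma mgf_le_exp_of_moment_le [IsProbabilityMeasure P] (hX : Measurable X)
    (hint : Integrable X P) (hcent : P[X] = 0) (ht : 0 ≤ t) (hK : 0 ≤ K) (htK : t * K < 1)
    (hmom : ∀ p : ℕ, 2 ≤ p →
      ∫⁻ ω, ENNReal.ofReal (|X ω| ^ p) ∂P ≤ ENNReal.ofReal (p ! * K ^ p)) :
    mgf X P t ≤ exp ((t * K) ^ 2 / (1 - t * K)) := by
  set c := (t * K) ^ 2 / (1 - t * K)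
  have hc : 0 ≤ c := div_nonneg (sq_nonneg _) (by linarith)
  have hr := integrable_exp_abs_sub_one_sub_of_moment_le hX ht hK htK hmom
  have hlin : Integrable (fun ω => 1 + t * X ω) P := (integrable_const 1).add (hint.const_mul t)
  have hr_le : ∫ ω, exp (t * |X ω|) - 1 - t * |X ω| ∂P ≤ c := by
    rw [← ENNReal.ofReal_le_ofReal_iff hc, ofReal_integral_eq_lintegral_ofReal hr
      (ae_of_all _ fun ω => sub_nonneg.mpr (by linarith [add_one_le_exp (t * |X ω|)]))]
    exact lintegral_exp_abs_sub_one_sub_le_of_moment_le hX ht hK htK hmom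
  calc mgf X P t
      ≤ ∫ ω, 1 + t * X ω + (exp (t * |X ω|) - 1 - t * |X ω|) ∂P := by
        refine integral_mono (integrable_exp_mul_of_moment_le hX hint ht hK htK hmom)
          (hlin.add hr) fun ω => ?_
        have h := Real.exp_le_one_add_add_exp_abs_sub_one_sub (t * X ω)
        rwa [abs_mul, abs_of_nonneg ht] at h
    _ = 1 + t * P[X] + ∫ ω, exp (t * |X ω|) - 1 - t * |X ω| ∂P := by
        rw [integral_add hlin hr,
          integral_add (integrable_const 1) (hint.const_mul t), integral_const_mul]
        simp
    _ ≤ 1 + c := by rw [hcent]; linarith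
    _ ≤ exp c := by linarith [add_one_le_exp c]

end MomentBound

section Chernoff

variable {Ω : Type*} [MeasurableSpace Ω] {P : Measure Ω} [IsFiniteMeasure P] {ι : Type*}
  {X : ι → Ω → ℝ} {t c : ℝ}

lemma measureReal_sum_ge_le_of_iIndepFun_of_mgf_le (hX : ∀ i, Measurable (X i))
    (hindep : iIndepFun X P) (s : Finset ι) (ht : 0 ≤ t)
    (hint : ∀ i ∈ s, Integrable (fun ω => exp (t * X i ω)) P)
    (hmgf : ∀ i ∈ s, mgf (X i) P t ≤ exp c) (a : ℝ) :
    P.real {ω | a ≤ ∑ i ∈ s, X i ω} ≤ exp (-t * a + #s * c) := by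
  have hmgf_sum : mgf (∑ i ∈ s, X i) P t ≤ exp (#s * c) := by
    rw [hindep.mgf_sum hX, exp_nat_mul, ← prod_const]
    exact prod_le_prod (fun _ _ => mgf_nonneg) hmgf
  calc P.real {ω | a ≤ ∑ i ∈ s, X i ω}
      = P.real {ω | a ≤ (∑ i ∈ s, X i) ω} := by simp only [Finset.sum_apply]
    _ ≤ exp (-t * a) * mgf (∑ i ∈ s, X i) P t :=
        measure_ge_le_exp_mul_mgf a ht (hindep.integrable_exp_mul_sum hX hint)
    _ ≤ exp (-t * a + #s * c) := by
        rw [exp_add]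
        gcongr

lemma measureReal_sum_filter_ge_le_of_iIndepFun_of_mgf_le (hX : ∀ i, Measurable (X i))
    (s : Finset ι) (q : ι → Prop) [DecidablePred q]
    (hindep : iIndepFun (fun i : {i // i ∈ s ∧ q i} => X i) P) (ht : 0 ≤ t)
    (hint : ∀ i ∈ s, Integrable (fun ω => exp (t * X i ω)) P)
    (hmgf : ∀ i ∈ s, mgf (X i) P t ≤ exp c) (a : ℝ) :
    P.real {ω | a ≤ ∑ i ∈ s with q i, X i ω} ≤ exp (-t * a + #{i ∈ s | q i} * c) := by
  classical
  have hfilter : {i ∈ s | i ∈ s ∧ q i} = {i ∈ s | q i} := filter_congr fun i hi => and_iff_right hi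
  have h := measureReal_sum_ge_le_of_iIndepFun_of_mgf_le (X := fun i : {i // i ∈ s ∧ q i} => X i)
    (fun i => hX i) hindep (s.subtype fun i => i ∈ s ∧ q i) ht (fun i _ => hint i i.2.1)
    (fun i _ => hmgf i i.2.1) a
  convert h using 5 with ω
  · rw [sum_subtype_eq_sum_filter (fun i => X i ω), hfilter]
  · rw [card_subtype, hfilter]

lemma measureReal_add_ge_le (f g : Ω → ℝ) (a : ℝ) :
    P.real {ω | a ≤ f ω + g ω} ≤ P.real {ω | a / 2 ≤ f ω} + P.real {ω | a / 2 ≤ g ω} := by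
  refine (measureReal_mono fun ω (hω : a ≤ f ω + g ω) => ?_).trans (measureReal_union_le _ _)
  by_contra h
  simp only [Set.mem_union, Set.mem_ofPred_eq, not_or, not_le] at h
  linarith

end Chernoff

lemma measureReal_sum_filter_ge_le_of_identDistrib_of_moment_le {Ω ι : Type*}
    [MeasurableSpace Ω] {P : Measure Ω} [IsProbabilityMeasure P] {X : ι → Ω → ℝ} {Y : Ω → ℝ}
    {t K N : ℝ} (hX : ∀ i, Measurable (X i)) (hY : Measurable Y) (hint : Integrable Y P)
    (hcent : P[Y] = 0) (ht : 0 ≤ t) (hK : 0 ≤ K) (htK : t * K < 1)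
    (hmom : ∀ p : ℕ, 2 ≤ p →
      ∫⁻ ω, ENNReal.ofReal (|Y ω| ^ p) ∂P ≤ ENNReal.ofReal (p ! * K ^ p))
    (s : Finset ι) (q : ι → Prop) [DecidablePred q] (hid : ∀ i ∈ s, IdentDistrib (X i) Y P P)
    (hindep : iIndepFun (fun i : {i // i ∈ s ∧ q i} => X i) P) (hcard : #{i ∈ s | q i} ≤ N)
    (a : ℝ) :
    P.real {ω | a ≤ ∑ i ∈ s with q i, X i ω} ≤
      exp (-t * a + N * ((t * K) ^ 2 / (1 - t * K))) := by
  have hint_exp : ∀ i ∈ s, Integrable (fun ω => exp (t * X i ω)) P := fun i hi =>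
    ((hid i hi).comp (measurable_const_mul t).exp).integrable_iff.mpr <|
      integrable_exp_mul_of_moment_le hY hint ht hK htK hmom
  have hmgf : ∀ i ∈ s, mgf (X i) P t ≤ exp ((t * K) ^ 2 / (1 - t * K)) := fun i hi => by
    rw [mgf_congr_identDistrib (hid i hi)]
    exact mgf_le_exp_of_moment_le hY hint hcent ht hK htK hmom
  refine (measureReal_sum_filter_ge_le_of_iIndepFun_of_mgf_le hX s q hindep ht hint_exp hmgf
    a).trans (exp_le_exp.mpr (add_le_add_right ?_ _))
  exact mul_le_mul_of_nonneg_right hcard (div_nonneg (sq_nonneg _) (by linarith))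

lemma Nat.card_filter_even_Icc_two (n : ℕ) : #{k ∈ Icc 2 n | Even k} = n / 2 := by
  rw [← Nat.Ioc_filter_dvd_card_eq_div]
  congr 1
  ext k
  simp only [mem_filter, mem_Icc, mem_Ioc, Nat.even_iff]
  omega

lemma Nat.card_filter_odd_Icc_two (n : ℕ) : #{k ∈ Icc 2 n | Odd k} = (n - 1) / 2 := by
  have h := card_filter_add_card_filter_not (s := Icc 2 n) (fun k => Even k)
  simp only [Nat.not_even_iff_odd, Nat.card_filter_even_Icc_two, Nat.card_Icc] at h
  omega

theorem stmt_14_general {Ω : Type*} [MeasurableSpace Ω] (P : Measure Ω) [IsProbabilityMeasure P]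
    (n : ℕ) (ξ : ℕ → Ω → ℝ) (hmeas : ∀ k, Measurable (ξ k))
    (K : ℝ) (hK : 0 < K)
    (hid : ∀ k ∈ Finset.Icc 2 n, IdentDistrib (ξ k) (ξ 2) P P)
    (hcent : ∫ ω, ξ 2 ω ∂P = 0) (hint : Integrable (ξ 2) P)
    (hmom : ∀ p : ℕ, 1 ≤ p →
      ∫⁻ ω, ENNReal.ofReal (|ξ 2 ω| ^ p) ∂P ≤ ENNReal.ofReal ((Nat.factorial p : ℝ) * K ^ p))
    (hindep_odd :
      iIndepFun
        (fun k : {k : ℕ // k ∈ Finset.Icc 2 n ∧ Odd k} => ξ k) P)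
    (hindep_even :
      iIndepFun
        (fun k : {k : ℕ // k ∈ Finset.Icc 2 n ∧ Even k} => ξ k) P) :
    ∀ a : ℝ, 0 < a → ∀ l : ℝ, 0 < l → l < 1 / K →
      P {ω | a ≤ ∑ k ∈ Finset.Icc 2 n, ξ k ω} ≤
        ENNReal.ofReal
          (2 * Real.exp (-l * a / 2 + ((n : ℝ) / 2) * l ^ 2 * K ^ 2 / (1 - l * K))) := by
  intro a _ l hl hlK
  replace hlK : l * K < 1 := (lt_div_iff₀ hK).mp hlK
  have half : ∀ (q : ℕ → Prop) [DecidablePred q],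
      iIndepFun (fun k : {k // k ∈ Icc 2 n ∧ q k} => ξ k) P → 2 * #{k ∈ Icc 2 n | q k} ≤ n →
      P.real {ω | a / 2 ≤ ∑ k ∈ Icc 2 n with q k, ξ k ω} ≤
        exp (-l * a / 2 + ((n : ℝ) / 2) * l ^ 2 * K ^ 2 / (1 - l * K)) := by
    intro q _ hindep hcard
    convert measureReal_sum_filter_ge_le_of_identDistrib_of_moment_le hmeas (hmeas 2) hint hcent
      hl.le hK.le hlK (fun p hp => hmom p (by omega)) _ q hid hindep (N := n / 2)
      (by rw [le_div_iff₀ two_pos, mul_comm]; exact_mod_cast hcard) (a / 2) using 2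
    ring
  have hsplit : ∀ ω, ∑ k ∈ Icc 2 n, ξ k ω =
      ∑ k ∈ Icc 2 n with Odd k, ξ k ω + ∑ k ∈ Icc 2 n with Even k, ξ k ω := fun ω => by
    rw [← sum_filter_add_sum_filter_not _ (fun k => Odd k)]
    simp only [Nat.not_odd_iff_even]
  rw [← ofReal_measureReal, two_mul]
  refine ENNReal.ofReal_le_ofReal ?_
  simp_rw [hsplit]
  refine (measureReal_add_ge_le _ _ a).trans (add_le_add ?_ ?_)
  · exact half _ hindep_odd (by rw [Nat.card_filter_odd_Icc_two]; omega)
  · exact half _ hindep_even (by rw [Nat.card_filter_even_Icc_two]; omega)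

/-- Bernstein-type bound for a 2-dependent family: if `ξ₂, …, ξ_n` are identically
distributed, centered, satisfy `E[|ξ₂|^p] ≤ p! K^p` for all `p ≥ 1`, and the odd-indexed
and even-indexed subfamilies are each mutually independent, then for `a > 0` and
`0 < λ < 1/K`, `P(ξ₂ + ⋯ + ξ_n ≥ a) ≤ 2 exp(−λa/2 + (n/2) λ²K²/(1−λK))`. -/
theorem stmt_14 {Ω : Type*} [MeasurableSpace Ω] (P : Measure Ω) [IsProbabilityMeasure P]
    (n : ℕ) (hn : 2 ≤ n) (ξ : ℕ → Ω → ℝ) (hmeas : ∀ k, Measurable (ξ k))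
    (K : ℝ) (hK : 0 < K)
    (hid : ∀ k ∈ Finset.Icc 2 n, IdentDistrib (ξ k) (ξ 2) P P)
    (hcent : ∫ ω, ξ 2 ω ∂P = 0) (hint : Integrable (ξ 2) P)
    (hmom : ∀ p : ℕ, 1 ≤ p →
      ∫⁻ ω, ENNReal.ofReal (|ξ 2 ω| ^ p) ∂P ≤ ENNReal.ofReal ((Nat.factorial p : ℝ) * K ^ p))
    (hindep_odd :
      iIndepFun
        (fun k : {k : ℕ // k ∈ Finset.Icc 2 n ∧ Odd k} => ξ k) P)
    (hindep_even :
      iIndepFun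
        (fun k : {k : ℕ // k ∈ Finset.Icc 2 n ∧ Even k} => ξ k) P) :
    ∀ a : ℝ, 0 < a → ∀ l : ℝ, 0 < l → l < 1 / K →
      P {ω | a ≤ ∑ k ∈ Finset.Icc 2 n, ξ k ω} ≤
        ENNReal.ofReal
          (2 * Real.exp (-l * a / 2 + ((n : ℝ) / 2) * l ^ 2 * K ^ 2 / (1 - l * K))) :=
  stmt_14_general P n ξ hmeas K hK hid hcent hint hmom hindep_odd hindep_even
end
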